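/- Let d : S × S → ℝ_{≥0} on S = [−T,T] × ℝ^{nd} be defined by d((s,x),(t,y)) := ρ(t−s, θ_{t,s}(x) − y), where ρ(u,z) = |u|^{1/2} + Σ_i |z_i|^{1/(2i-1)} and θ is the flow of a Lipschitz vector field F with the cascade structure (F_i depends only on time and coordinates x_{i-1},…,x_n, and F_1 on all coordinates). Then there exists a constant C = C(F, T, n, d) ≥ 1 such that for all (s,x),(t,y),(σ,ξ) ∈ S with d((s,x),(σ,ξ)) ≤ 1 and d((σ,ξ),(t,y)) ≤ 1, one has d((s,x),(t,y)) ≤ C ( d((s,x),(σ,ξ)) + d((σ,ξ),(t,y)) ). -/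

import Mathlib

open scoped BigOperators

/-- Euclidean norm of the i-th d-dimensional block of z ∈ ℝ^{nd}. -/
noncomputable def blockNorm (n d : ℕ) (z : EuclideanSpace ℝ (Fin n × Fin d)) (i : Fin n) : ℝ :=
  Real.sqrt (∑ q : Fin d, (z (i, q)) ^ 2)

/-- The parabolic quasi-norm ρ(u,z) = |u|^{1/2} + Σ_{i=1}^n |z_i|^{1/(2i-1)}. -/
noncomputable def rho (n d : ℕ) (u : ℝ) (z : EuclideanSpace ℝ (Fin n × Fin d)) : ℝ :=
  |u| ^ ((1:ℝ)/2) + ∑ i : Fin n, blockNorm n d z i ^ ((1:ℝ) / (2 * (i:ℕ) + 1))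

/-!
Write `Δ(u) = θ u σ a - θ u σ b`. Gronwall bounds `‖Δ(u)‖` by `‖a - b‖`, and the cascade structure
refines this blockwise: block `k` of `Δ'` is driven only by the blocks `j ≥ k - 1`, so by
induction on `m` the blocks `j ≥ m` of `Δ(t)` are bounded by `Σ_j |t - σ| ^ (m - j) |a_j - b_j|`
(truncated subtraction) when `|t - σ| ≤ 1`; time reversal handles `t < σ`.
Splitting `θ t s x - y = (θ t σ (θ σ s x) - θ t σ ξ) + (θ t σ ξ - y)` by the semigroup property
and using that `ρ` is subadditive, it remains to bound `(|t - σ| ^ (i - j) |w_j|) ^ (1 / (2i + 1))`,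
which weighted AM-GM splits into `|t - σ| ^ (1/2) + |w_j| ^ (1 / (2j + 1))` once `|w_j| ≤ 1`.
-/

open Set

section Blocks

variable {n d : ℕ}

noncomputable def blockProj (i : Fin n) :
    EuclideanSpace ℝ (Fin n × Fin d) →L[ℝ] EuclideanSpace ℝ (Fin d) :=
  LinearMap.toContinuousLinearMap
    { toFun := fun z => WithLp.toLp 2 fun q => z (i, q)
      map_add' := fun _ _ => rfl
      map_smul' := fun _ _ => rfl }

@[simp]
theorem blockProj_apply (i : Fin n) (z : EuclideanSpace ℝ (Fin n × Fin d)) (q : Fin d) :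
    blockProj i z q = z (i, q) :=
  rfl

theorem blockNorm_eq_norm_blockProj (z : EuclideanSpace ℝ (Fin n × Fin d)) (i : Fin n) :
    blockNorm n d z i = ‖blockProj i z‖ := by
  simp [blockNorm, EuclideanSpace.norm_eq]

theorem blockNorm_nonneg (z : EuclideanSpace ℝ (Fin n × Fin d)) (i : Fin n) :
    0 ≤ blockNorm n d z i :=
  Real.sqrt_nonneg _

theorem blockNorm_add_le (z w : EuclideanSpace ℝ (Fin n × Fin d)) (i : Fin n) :
    blockNorm n d (z + w) i ≤ blockNorm n d z i + blockNorm n d w i := by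
  simp only [blockNorm_eq_norm_blockProj, map_add]
  exact norm_add_le _ _

theorem norm_sq_eq_sum_blockNorm_sq (z : EuclideanSpace ℝ (Fin n × Fin d)) :
    ‖z‖ ^ 2 = ∑ i, blockNorm n d z i ^ 2 := by
  simp only [EuclideanSpace.norm_sq_eq, Fintype.sum_prod_type, blockNorm, Real.norm_eq_abs,
    sq_abs]
  exact Finset.sum_congr rfl fun i _ =>
    (Real.sq_sqrt (Finset.sum_nonneg fun q _ => sq_nonneg _)).symm

theorem blockNorm_le_norm (z : EuclideanSpace ℝ (Fin n × Fin d)) (i : Fin n) :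
    blockNorm n d z i ≤ ‖z‖ := by
  refine (pow_le_pow_iff_left₀ (blockNorm_nonneg z i) (norm_nonneg z) two_ne_zero).1 ?_
  rw [norm_sq_eq_sum_blockNorm_sq]
  exact Finset.single_le_sum (fun j _ => sq_nonneg (blockNorm n d z j)) (Finset.mem_univ i)

theorem norm_le_sum_blockNorm (z : EuclideanSpace ℝ (Fin n × Fin d)) (s : Finset (Fin n))
    (hz : ∀ j ∉ s, ∀ q, z (j, q) = 0) :
    ‖z‖ ≤ ∑ j ∈ s, blockNorm n d z j := by
  have hsq : ‖z‖ ^ 2 = ∑ j ∈ s, blockNorm n d z j ^ 2 := by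
    rw [norm_sq_eq_sum_blockNorm_sq, ← Finset.sum_subset (Finset.subset_univ s)]
    intro j _ hj
    simp [blockNorm, hz j hj]
  refine (pow_le_pow_iff_left₀ (norm_nonneg z)
    (Finset.sum_nonneg fun j _ => blockNorm_nonneg z j) two_ne_zero).1 ?_
  rw [hsq]
  exact Finset.sum_sq_le_sq_sum_of_nonneg fun j _ => blockNorm_nonneg z j

end Blocks

theorem Real.rpow_sum_le_sum_rpow {ι : Type*} (s : Finset ι) {f : ι → ℝ}
    (hf : ∀ i ∈ s, 0 ≤ f i) {p : ℝ} (hp₀ : 0 < p) (hp₁ : p ≤ 1) :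
    (∑ i ∈ s, f i) ^ p ≤ ∑ i ∈ s, f i ^ p := by
  classical
  induction s using Finset.induction_on with
  | empty => simp [Real.zero_rpow hp₀.ne']
  | insert a s ha ih =>
    rw [Finset.sum_insert ha, Finset.sum_insert ha]
    have hs := Finset.forall_mem_insert _ _ _ |>.1 hf
    exact (Real.rpow_add_le_add_rpow hs.1 (Finset.sum_nonneg hs.2) hp₀.le hp₁).trans
      (add_le_add_right (ih hs.2) _)

/-- Weighted AM-GM with weights `2(i - j)/(2i + 1)` and `(2j + 1)/(2i + 1)`. -/
theorem rpow_pow_mul_le_sqrt_add_rpow {τ b : ℝ} (hτ : 0 ≤ τ) (hb₀ : 0 ≤ b) (hb₁ : b ≤ 1)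
    (i j : ℕ) :
    (τ ^ (i - j) * b) ^ ((1 : ℝ) / (2 * i + 1)) ≤
      τ ^ ((1 : ℝ) / 2) + b ^ ((1 : ℝ) / (2 * j + 1)) := by
  have hτ' : 0 ≤ τ ^ ((1 : ℝ) / 2) := Real.rpow_nonneg hτ _
  have hb' : 0 ≤ b ^ ((1 : ℝ) / (2 * j + 1)) := Real.rpow_nonneg hb₀ _
  rcases le_or_gt i j with hij | hji
  · rw [Nat.sub_eq_zero_of_le hij, pow_zero, one_mul]
    have hexp : (1 : ℝ) / (2 * j + 1) ≤ 1 / (2 * i + 1) := by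
      gcongr
    linarith [Real.rpow_le_rpow_of_exponent_ge' hb₀ hb₁ (by positivity) hexp]
  · set α : ℝ := 1 / (2 * i + 1) with hα
    have hw₁ : 0 ≤ 2 * ((i - j : ℕ) : ℝ) * α := by positivity
    have hw₂ : 0 ≤ (2 * j + 1) * α := by positivity
    have hw : 2 * ((i - j : ℕ) : ℝ) * α + (2 * j + 1) * α = 1 := by
      rw [Nat.cast_sub hji.le, hα]
      field_simp
      ring
    have hsplit : (τ ^ (i - j) * b) ^ α = (τ ^ ((1 : ℝ) / 2)) ^ (2 * ((i - j : ℕ) : ℝ) * α) *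
        (b ^ ((1 : ℝ) / (2 * j + 1))) ^ ((2 * j + 1) * α) := by
      rw [Real.mul_rpow (by positivity) hb₀, ← Real.rpow_natCast, ← Real.rpow_mul hτ,
        ← Real.rpow_mul hτ, ← Real.rpow_mul hb₀]
      congr 2 <;> field_simp
    rw [hsplit]
    refine (Real.geom_mean_le_arith_mean2_weighted hw₁ hw₂ hτ' hb' hw).trans ?_
    nlinarith

section Rho

variable {n d : ℕ}

theorem sqrt_abs_le_rho (u : ℝ) (z : EuclideanSpace ℝ (Fin n × Fin d)) :
    |u| ^ ((1 : ℝ) / 2) ≤ rho n d u z :=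
  le_add_of_nonneg_right (Finset.sum_nonneg fun i _ => Real.rpow_nonneg (blockNorm_nonneg z i) _)

theorem rpow_blockNorm_le_rho (u : ℝ) (z : EuclideanSpace ℝ (Fin n × Fin d)) (j : Fin n) :
    blockNorm n d z j ^ ((1 : ℝ) / (2 * (j : ℕ) + 1)) ≤ rho n d u z :=
  le_add_of_nonneg_of_le (Real.rpow_nonneg (abs_nonneg u) _)
    (Finset.single_le_sum
      (f := fun i : Fin n => blockNorm n d z i ^ ((1 : ℝ) / (2 * (i : ℕ) + 1)))
      (fun i _ => Real.rpow_nonneg (blockNorm_nonneg z i) _) (Finset.mem_univ j))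

private theorem le_one_of_rpow_le_one {x p : ℝ} (hx : 0 ≤ x) (hp : 0 < p) (h : x ^ p ≤ 1) :
    x ≤ 1 :=
  (Real.rpow_le_rpow_iff hx zero_le_one hp).1 (by rwa [Real.one_rpow])

theorem abs_le_one_of_rho_le_one {u : ℝ} {z : EuclideanSpace ℝ (Fin n × Fin d)}
    (h : rho n d u z ≤ 1) : |u| ≤ 1 :=
  le_one_of_rpow_le_one (abs_nonneg u) one_half_pos ((sqrt_abs_le_rho u z).trans h)

theorem blockNorm_le_one_of_rho_le_one {u : ℝ} {z : EuclideanSpace ℝ (Fin n × Fin d)}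
    (h : rho n d u z ≤ 1) (j : Fin n) : blockNorm n d z j ≤ 1 :=
  le_one_of_rpow_le_one (blockNorm_nonneg z j) (by positivity)
    ((rpow_blockNorm_le_rho u z j).trans h)

theorem rho_add_le (u v : ℝ) (z w : EuclideanSpace ℝ (Fin n × Fin d)) :
    rho n d (u + v) (z + w) ≤ rho n d u z + rho n d v w := by
  have hu : |u + v| ^ ((1 : ℝ) / 2) ≤ |u| ^ ((1 : ℝ) / 2) + |v| ^ ((1 : ℝ) / 2) :=
    (Real.rpow_le_rpow (abs_nonneg _) (abs_add_le u v) (by norm_num)).trans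
      (Real.rpow_add_le_add_rpow (abs_nonneg u) (abs_nonneg v) (by norm_num) (by norm_num))
  have hz : ∀ i : Fin n, blockNorm n d (z + w) i ^ ((1 : ℝ) / (2 * (i : ℕ) + 1)) ≤
      blockNorm n d z i ^ ((1 : ℝ) / (2 * (i : ℕ) + 1)) +
        blockNorm n d w i ^ ((1 : ℝ) / (2 * (i : ℕ) + 1)) := fun i =>
    (Real.rpow_le_rpow (blockNorm_nonneg _ i) (blockNorm_add_le z w i) (by positivity)).trans
      (Real.rpow_add_le_add_rpow (blockNorm_nonneg z i) (blockNorm_nonneg w i) (by positivity)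
        (div_le_one_of_le₀ (by linarith [(i : ℕ).cast_nonneg (α := ℝ)]) (by positivity)))
  have := Finset.sum_le_sum fun i (_ : i ∈ Finset.univ) => hz i
  rw [Finset.sum_add_distrib] at this
  unfold rho
  linarith

theorem rho_le_of_rpow_blockNorm_le {M : ℝ} (u : ℝ)
    {z : EuclideanSpace ℝ (Fin n × Fin d)}
    (hz : ∀ i : Fin n, blockNorm n d z i ^ ((1 : ℝ) / (2 * (i : ℕ) + 1)) ≤ M) :
    rho n d u z ≤ |u| ^ ((1 : ℝ) / 2) + n * M := by
  have := Finset.sum_le_sum fun i (_ : i ∈ Finset.univ) => hz i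
  rw [Finset.sum_const, Finset.card_univ, Fintype.card_fin, nsmul_eq_mul] at this
  unfold rho
  linarith

end Rho

section Flow

variable {n d : ℕ}

def IsCascade (F : ℝ → EuclideanSpace ℝ (Fin n × Fin d) → EuclideanSpace ℝ (Fin n × Fin d)) :
    Prop :=
  ∀ (t : ℝ) (a b : EuclideanSpace ℝ (Fin n × Fin d)) (k : Fin n),
    (∀ p : Fin n × Fin d, (k : ℕ) ≤ (p.1 : ℕ) + 1 → a p = b p) →
      ∀ q : Fin d, F t a (k, q) = F t b (k, q)

structure IsFlow (F : ℝ → EuclideanSpace ℝ (Fin n × Fin d) → EuclideanSpace ℝ (Fin n × Fin d))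
    (θ : ℝ → ℝ → EuclideanSpace ℝ (Fin n × Fin d) → EuclideanSpace ℝ (Fin n × Fin d)) :
    Prop where
  apply_self : ∀ s x, θ s s x = x
  hasDerivAt : ∀ s x t, HasDerivAt (fun u => θ u s x) (F t (θ t s x)) t

variable {κ : NNReal}
  {F : ℝ → EuclideanSpace ℝ (Fin n × Fin d) → EuclideanSpace ℝ (Fin n × Fin d)}
  {θ : ℝ → ℝ → EuclideanSpace ℝ (Fin n × Fin d) → EuclideanSpace ℝ (Fin n × Fin d)}

theorem IsCascade.blockNorm_sub_le (hF : IsCascade F) {t : ℝ} (hLip : LipschitzWith κ (F t))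
    (a b : EuclideanSpace ℝ (Fin n × Fin d)) (k : Fin n) :
    blockNorm n d (F t a - F t b) k ≤
      κ * ∑ j : Fin n with k.val ≤ j.val + 1, blockNorm n d (a - b) j := by
  classical
  -- `b'` agrees with `b` on the blocks that block `k` of `F` sees, and with `a` elsewhere
  set b' : EuclideanSpace ℝ (Fin n × Fin d) :=
    WithLp.toLp 2 fun p => if (k : ℕ) ≤ (p.1 : ℕ) + 1 then b p else a p with hb'
  have hFb : blockNorm n d (F t a - F t b) k = blockNorm n d (F t a - F t b') k := by
    have := hF t b' b k fun p hp => by simp [hb', hp]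
    simp [blockNorm, this]
  have hsupp : ∀ j ∉ ({j : Fin n | k.val ≤ j.val + 1} : Finset (Fin n)), ∀ q,
      (a - b') (j, q) = 0 := by
    intro j hj q
    simp only [Finset.mem_filter, Finset.mem_univ, true_and] at hj
    simp [hb', hj]
  have hblocks : ∀ j ∈ ({j : Fin n | k.val ≤ j.val + 1} : Finset (Fin n)),
      blockNorm n d (a - b') j = blockNorm n d (a - b) j := by
    intro j hj
    simp only [Finset.mem_filter, Finset.mem_univ, true_and] at hj
    simp [hb', blockNorm, hj]
  calc blockNorm n d (F t a - F t b) k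
      ≤ ‖F t a - F t b'‖ := hFb ▸ blockNorm_le_norm _ k
    _ ≤ κ * ‖a - b'‖ := by simpa only [dist_eq_norm] using hLip.dist_le_mul a b'
    _ ≤ κ * ∑ j : Fin n with k.val ≤ j.val + 1, blockNorm n d (a - b) j := by
      rw [← Finset.sum_congr rfl hblocks]
      exact mul_le_mul_of_nonneg_left (norm_le_sum_blockNorm _ _ hsupp) κ.coe_nonneg

theorem IsFlow.apply_apply (hθ : IsFlow F θ) (hLip : ∀ t, LipschitzWith κ (F t))
    (s σ t : ℝ) (x : EuclideanSpace ℝ (Fin n × Fin d)) : θ t σ (θ σ s x) = θ t s x := by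
  have hσ : σ ∈ Ioo (min σ t - 1) (max σ t + 1) :=
    ⟨by linarith [min_le_left σ t], by linarith [le_max_left σ t]⟩
  have ht : t ∈ Icc (min σ t - 1) (max σ t + 1) :=
    ⟨by linarith [min_le_right σ t], by linarith [le_max_right σ t]⟩
  exact ODE_solution_unique_of_mem_Icc (s := fun _ => univ)
    (fun u _ => (hLip u).lipschitzOnWith) hσ
    (fun u _ => (hθ.hasDerivAt σ (θ σ s x) u).continuousAt.continuousWithinAt)
    (fun u _ => hθ.hasDerivAt σ (θ σ s x) u) (fun _ _ => trivial)
    (fun u _ => (hθ.hasDerivAt s x u).continuousAt.continuousWithinAt)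
    (fun u _ => hθ.hasDerivAt s x u) (fun _ _ => trivial)
    (hθ.apply_self σ (θ σ s x)) ht

theorem IsFlow.norm_sub_le (hθ : IsFlow F θ) (hLip : ∀ t, LipschitzWith κ (F t)) {σ t u : ℝ}
    (hu : u ∈ Icc σ t) (a b : EuclideanSpace ℝ (Fin n × Fin d)) :
    ‖θ u σ a - θ u σ b‖ ≤ ‖a - b‖ * Real.exp (κ * (u - σ)) := by
  simpa only [dist_eq_norm] using dist_le_of_trajectories_ODE hLip
    (fun w _ => (hθ.hasDerivAt σ a w).continuousAt.continuousWithinAt)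
    (fun w _ => (hθ.hasDerivAt σ a w).hasDerivWithinAt)
    (fun w _ => (hθ.hasDerivAt σ b w).continuousAt.continuousWithinAt)
    (fun w _ => (hθ.hasDerivAt σ b w).hasDerivWithinAt)
    (by simp [hθ.apply_self, dist_eq_norm]) u hu

theorem IsFlow.timeReversal (hθ : IsFlow F θ) (c : ℝ) :
    IsFlow (fun u z => -F (c - u) z) (fun u s z => θ (c - u) (c - s) z) where
  apply_self s x := hθ.apply_self (c - s) x
  hasDerivAt s x t := by
    simpa [Function.comp_def] using
      (hθ.hasDerivAt (c - s) x (c - t)).scomp t ((hasDerivAt_id t).const_sub c)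

theorem IsCascade.timeReversal (hF : IsCascade F) (c : ℝ) :
    IsCascade fun u z => -F (c - u) z := fun u a b k h q => by
  simp only [PiLp.neg_apply, hF (c - u) a b k h q]

end Flow

noncomputable def cascadeConst (κ : NNReal) (n : ℕ) : ℝ :=
  (1 + n * κ) ^ n * (n * Real.exp κ + 1)

theorem one_le_cascadeConst (κ : NNReal) (n : ℕ) : 1 ≤ cascadeConst κ n :=
  one_le_mul_of_one_le_of_one_le (one_le_pow₀ (le_add_of_nonneg_right (by positivity)))
    (le_add_of_nonneg_left (by positivity))

section CascadeEstimate

variable {n d : ℕ} {κ : NNReal}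
  {F : ℝ → EuclideanSpace ℝ (Fin n × Fin d) → EuclideanSpace ℝ (Fin n × Fin d)}
  {θ : ℝ → ℝ → EuclideanSpace ℝ (Fin n × Fin d) → EuclideanSpace ℝ (Fin n × Fin d)}

theorem IsFlow.blockNorm_sub_le_add_mul (hθ : IsFlow F θ) {σ t L : ℝ}
    (a b : EuclideanSpace ℝ (Fin n × Fin d)) (k : Fin n)
    (hL : ∀ w ∈ Icc σ t, blockNorm n d (F w (θ w σ a) - F w (θ w σ b)) k ≤ L)
    {u : ℝ} (hu : u ∈ Icc σ t) :
    blockNorm n d (θ u σ a - θ u σ b) k ≤ blockNorm n d (a - b) k + L * (u - σ) := by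
  have hderiv : ∀ w ∈ Icc σ t, HasDerivWithinAt (fun w => blockProj k (θ w σ a - θ w σ b))
      (blockProj k (F w (θ w σ a) - F w (θ w σ b))) (Icc σ t) w := fun w _ =>
    ((blockProj k).hasFDerivAt.comp_hasDerivAt w
      ((hθ.hasDerivAt σ a w).sub (hθ.hasDerivAt σ b w))).hasDerivWithinAt
  have hmvt := Convex.norm_image_sub_le_of_norm_hasDerivWithin_le hderiv
    (fun w hw => (blockNorm_eq_norm_blockProj _ k).symm ▸ hL w hw) (convex_Icc σ t)
    (left_mem_Icc.2 (hu.1.trans hu.2)) hu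
  rw [Real.norm_eq_abs, abs_of_nonneg (sub_nonneg.2 hu.1)] at hmvt
  simp only [hθ.apply_self, blockNorm_eq_norm_blockProj] at hmvt ⊢
  linarith [norm_le_norm_add_norm_sub' (blockProj k (θ u σ a - θ u σ b)) (blockProj k (a - b))]

theorem IsFlow.sum_blockNorm_tail_succ_le (hF : IsCascade F) (hLip : ∀ t, LipschitzWith κ (F t))
    (hθ : IsFlow F θ) {σ t M : ℝ} (a b : EuclideanSpace ℝ (Fin n × Fin d)) (m : ℕ)
    (hM : ∀ w ∈ Icc σ t, ∑ j : Fin n with m ≤ j.val, blockNorm n d (θ w σ a - θ w σ b) j ≤ M)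
    {u : ℝ} (hu : u ∈ Icc σ t) :
    ∑ j : Fin n with m + 1 ≤ j.val, blockNorm n d (θ u σ a - θ u σ b) j ≤
      ∑ j : Fin n with m + 1 ≤ j.val, blockNorm n d (a - b) j + n * (κ * M * (u - σ)) := by
  have hM₀ : 0 ≤ M := (Finset.sum_nonneg fun j _ => blockNorm_nonneg _ j).trans
    (hM σ (left_mem_Icc.2 (hu.1.trans hu.2)))
  have hblock : ∀ k : Fin n, m + 1 ≤ (k : ℕ) →
      blockNorm n d (θ u σ a - θ u σ b) k ≤ blockNorm n d (a - b) k + κ * M * (u - σ) := by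
    refine fun k hk => hθ.blockNorm_sub_le_add_mul a b k (fun w hw => ?_) hu
    refine ((hF.blockNorm_sub_le (hLip w) _ _ k).trans
      (mul_le_mul_of_nonneg_left ((Finset.sum_le_sum_of_subset_of_nonneg ?_
        fun j _ _ => blockNorm_nonneg _ j).trans (hM w hw)) κ.coe_nonneg))
    intro j
    simp only [Finset.mem_filter, Finset.mem_univ, true_and]
    omega
  calc ∑ j : Fin n with m + 1 ≤ j.val, blockNorm n d (θ u σ a - θ u σ b) j
      ≤ ∑ j : Fin n with m + 1 ≤ j.val, (blockNorm n d (a - b) j + κ * M * (u - σ)) :=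
        Finset.sum_le_sum fun k hk => hblock k (Finset.mem_filter.1 hk).2
    _ ≤ ∑ j : Fin n with m + 1 ≤ j.val, blockNorm n d (a - b) j + n * (κ * M * (u - σ)) := by
      rw [Finset.sum_add_distrib, Finset.sum_const, nsmul_eq_mul]
      gcongr
      · exact mul_nonneg (mul_nonneg κ.coe_nonneg hM₀) (sub_nonneg.2 hu.1)
      · exact_mod_cast (Finset.card_filter_le _ _).trans (Finset.card_fin n).le

theorem IsFlow.sum_blockNorm_tail_le (hF : IsCascade F) (hLip : ∀ t, LipschitzWith κ (F t))
    (hθ : IsFlow F θ) {σ t : ℝ} (ht : t - σ ≤ 1) (a b : EuclideanSpace ℝ (Fin n × Fin d))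
    (m : ℕ) {u : ℝ} (hu : u ∈ Icc σ t) :
    ∑ j : Fin n with m ≤ j.val, blockNorm n d (θ u σ a - θ u σ b) j ≤
      (1 + n * κ) ^ m * (n * Real.exp κ + 1) *
        ∑ j, (t - σ) ^ (m - j.val) * blockNorm n d (a - b) j := by
  have hτ : 0 ≤ t - σ := sub_nonneg.2 (hu.1.trans hu.2)
  have hC : 1 ≤ n * Real.exp κ + 1 := le_add_of_nonneg_left (by positivity)
  induction m generalizing u with
  | zero =>
    have hexp : Real.exp (κ * (u - σ)) ≤ Real.exp κ :=
      Real.exp_le_exp.2 (mul_le_of_le_one_right κ.coe_nonneg (by linarith [hu.1, hu.2]))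
    calc ∑ j : Fin n with 0 ≤ j.val, blockNorm n d (θ u σ a - θ u σ b) j
        ≤ ∑ _j : Fin n, ‖θ u σ a - θ u σ b‖ :=
          Finset.sum_le_sum_of_subset_of_nonneg (Finset.subset_univ _)
            (fun j _ _ => blockNorm_nonneg _ j) |>.trans
            (Finset.sum_le_sum fun j _ => blockNorm_le_norm _ j)
      _ ≤ n * (‖a - b‖ * Real.exp κ) := by
          rw [Finset.sum_const, Finset.card_univ, Fintype.card_fin, nsmul_eq_mul]
          gcongr
          exact (hθ.norm_sub_le hLip hu a b).trans (by gcongr)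
      _ ≤ (1 + n * κ) ^ 0 * (n * Real.exp κ + 1) *
            ∑ j, (t - σ) ^ (0 - j.val) * blockNorm n d (a - b) j := by
          simp only [pow_zero, one_mul, Nat.zero_sub]
          have := norm_le_sum_blockNorm (a - b) Finset.univ (by simp)
          have := Finset.sum_nonneg fun j (_ : j ∈ Finset.univ) => blockNorm_nonneg (a - b) j
          nlinarith [Real.exp_pos κ]
  | succ m ih =>
    set W : ℕ → ℝ := fun m => ∑ j : Fin n, (t - σ) ^ (m - j.val) * blockNorm n d (a - b) j
    set C : ℝ := (1 + n * κ) ^ m * (n * Real.exp κ + 1)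
    have hC₁ : 1 ≤ C := one_le_mul_of_one_le_of_one_le
      (one_le_pow₀ (le_add_of_nonneg_right (by positivity))) hC
    have hhead : ∑ j : Fin n with m + 1 ≤ j.val, blockNorm n d (a - b) j ≤ W (m + 1) := by
      refine (Finset.sum_congr rfl fun j hj => ?_).trans_le
        (Finset.sum_le_sum_of_subset_of_nonneg (Finset.subset_univ _)
          fun j _ _ => mul_nonneg (pow_nonneg hτ _) (blockNorm_nonneg _ j))
      rw [Nat.sub_eq_zero_of_le (Finset.mem_filter.1 hj).2, pow_zero, one_mul]
    have hshift : (u - σ) * W m ≤ W (m + 1) := by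
      refine (mul_le_mul_of_nonneg_right (sub_le_sub_right hu.2 σ) (Finset.sum_nonneg fun j _ =>
        mul_nonneg (pow_nonneg hτ _) (blockNorm_nonneg _ j))).trans ?_
      rw [Finset.mul_sum]
      refine Finset.sum_le_sum fun j _ => ?_
      rw [← mul_assoc, ← pow_succ']
      exact mul_le_mul_of_nonneg_right (pow_le_pow_of_le_one hτ ht (by omega))
        (blockNorm_nonneg _ j)
    have hW : 0 ≤ W (m + 1) := Finset.sum_nonneg fun j _ =>
        mul_nonneg (pow_nonneg hτ _) (blockNorm_nonneg _ j)
    calc ∑ j : Fin n with m + 1 ≤ j.val, blockNorm n d (θ u σ a - θ u σ b) j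
        ≤ ∑ j : Fin n with m + 1 ≤ j.val, blockNorm n d (a - b) j
            + n * (κ * (C * W m) * (u - σ)) :=
          hθ.sum_blockNorm_tail_succ_le hF hLip a b m (fun w hw => ih hw) hu
      _ ≤ W (m + 1) + n * κ * C * W (m + 1) := by
          have : n * (κ * (C * W m) * (u - σ)) = n * κ * C * ((u - σ) * W m) := by ring
          rw [this]
          gcongr
      _ ≤ (1 + n * κ) ^ (m + 1) * (n * Real.exp κ + 1) * W (m + 1) := by
          rw [pow_succ]
          nlinarith [mul_nonneg (mul_nonneg (Nat.cast_nonneg n) κ.coe_nonneg) hW]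

theorem IsFlow.blockNorm_sub_le_of_le (hF : IsCascade F) (hLip : ∀ t, LipschitzWith κ (F t))
    (hθ : IsFlow F θ) {σ t : ℝ} (hσt : σ ≤ t) (ht : t - σ ≤ 1)
    (a b : EuclideanSpace ℝ (Fin n × Fin d)) (i : Fin n) :
    blockNorm n d (θ t σ a - θ t σ b) i ≤
      cascadeConst κ n * ∑ j : Fin n, (t - σ) ^ (i.val - j.val) * blockNorm n d (a - b) j := by
  calc blockNorm n d (θ t σ a - θ t σ b) i
      ≤ ∑ j : Fin n with i.val ≤ j.val, blockNorm n d (θ t σ a - θ t σ b) j :=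
        Finset.single_le_sum (fun j _ => blockNorm_nonneg _ j) (by simp)
    _ ≤ _ := hθ.sum_blockNorm_tail_le hF hLip ht a b i (right_mem_Icc.2 hσt)
    _ ≤ cascadeConst κ n * ∑ j : Fin n, (t - σ) ^ (i.val - j.val) * blockNorm n d (a - b) j := by
        unfold cascadeConst
        gcongr
        · exact Finset.sum_nonneg fun j _ =>
            mul_nonneg (pow_nonneg (sub_nonneg.2 hσt) _) (blockNorm_nonneg _ j)
        · exact le_add_of_nonneg_right (by positivity)
        · exact i.2.le

theorem IsFlow.blockNorm_sub_le (hF : IsCascade F) (hLip : ∀ t, LipschitzWith κ (F t))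
    (hθ : IsFlow F θ) {σ t : ℝ} (ht : |t - σ| ≤ 1)
    (a b : EuclideanSpace ℝ (Fin n × Fin d)) (i : Fin n) :
    blockNorm n d (θ t σ a - θ t σ b) i ≤
      cascadeConst κ n * ∑ j : Fin n, |t - σ| ^ (i.val - j.val) * blockNorm n d (a - b) j := by
  rcases le_total σ t with hσt | htσ
  · rw [abs_of_nonneg (sub_nonneg.2 hσt)] at ht ⊢
    exact hθ.blockNorm_sub_le_of_le hF hLip hσt ht a b i
  · rw [abs_sub_comm, abs_of_nonneg (sub_nonneg.2 htσ)] at ht ⊢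
    have := (hθ.timeReversal (σ + t)).blockNorm_sub_le_of_le (hF.timeReversal (σ + t))
      (fun u => (hLip _).neg) htσ ht a b i
    simpa using this

theorem IsFlow.rpow_blockNorm_sub_le (hF : IsCascade F) (hLip : ∀ t, LipschitzWith κ (F t))
    (hθ : IsFlow F θ) {σ t : ℝ} (ht : |t - σ| ≤ 1) {a b : EuclideanSpace ℝ (Fin n × Fin d)}
    (hab : ∀ j, blockNorm n d (a - b) j ≤ 1) (u : ℝ) (i : Fin n) :
    blockNorm n d (θ t σ a - θ t σ b) i ^ ((1 : ℝ) / (2 * (i : ℕ) + 1)) ≤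
      cascadeConst κ n * (n * (|t - σ| ^ ((1 : ℝ) / 2) + rho n d u (a - b))) := by
  set α : ℝ := 1 / (2 * (i : ℕ) + 1)
  have hα₀ : 0 < α := by positivity
  have hα₁ : α ≤ 1 :=
    div_le_one_of_le₀ (by linarith [(i : ℕ).cast_nonneg (α := ℝ)]) (by positivity)
  have hK := one_le_cascadeConst κ n
  have hterm : ∀ j : Fin n, 0 ≤ |t - σ| ^ (i.val - j.val) * blockNorm n d (a - b) j :=
    fun j => mul_nonneg (pow_nonneg (abs_nonneg _) _) (blockNorm_nonneg _ j)
  set X := ∑ j : Fin n, |t - σ| ^ (i.val - j.val) * blockNorm n d (a - b) j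
  have hX : 0 ≤ X := Finset.sum_nonneg fun j _ => hterm j
  calc blockNorm n d (θ t σ a - θ t σ b) i ^ α
      ≤ (cascadeConst κ n * X) ^ α :=
        Real.rpow_le_rpow (blockNorm_nonneg _ i) (hθ.blockNorm_sub_le hF hLip ht a b i) hα₀.le
    _ = cascadeConst κ n ^ α * X ^ α := Real.mul_rpow (by positivity) hX
    _ ≤ cascadeConst κ n *
          ∑ j : Fin n, (|t - σ| ^ (i.val - j.val) * blockNorm n d (a - b) j) ^ α := by
        gcongr
        · exact Real.rpow_le_self_of_one_le hK hα₁
        · exact Real.rpow_sum_le_sum_rpow _ (fun j _ => hterm j) hα₀ hα₁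
    _ ≤ cascadeConst κ n * ∑ _j : Fin n, (|t - σ| ^ ((1 : ℝ) / 2) + rho n d u (a - b)) := by
        gcongr with j
        exact (rpow_pow_mul_le_sqrt_add_rpow (abs_nonneg _) (blockNorm_nonneg _ j) (hab j) i
          j).trans (add_le_add_right (rpow_blockNorm_le_rho u _ j) _)
    _ = cascadeConst κ n * (n * (|t - σ| ^ ((1 : ℝ) / 2) + rho n d u (a - b))) := by
        rw [Finset.sum_const, Finset.card_univ, Fintype.card_fin, nsmul_eq_mul]

end CascadeEstimate

theorem stmt_11_general (n d : ℕ) (T : ℝ) (κ : NNReal)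
    (F : ℝ → EuclideanSpace ℝ (Fin n × Fin d) → EuclideanSpace ℝ (Fin n × Fin d))
    (hLip : ∀ t, LipschitzWith κ (F t))
    (hcasc : ∀ (t : ℝ) (a b : EuclideanSpace ℝ (Fin n × Fin d)) (k : Fin n),
      (∀ p : Fin n × Fin d, (k:ℕ) ≤ (p.1:ℕ) + 1 → a p = b p) →
      ∀ q : Fin d, F t a (k, q) = F t b (k, q))
    (θ : ℝ → ℝ → EuclideanSpace ℝ (Fin n × Fin d) → EuclideanSpace ℝ (Fin n × Fin d))
    (hflow0 : ∀ s x, θ s s x = x)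
    (hflow : ∀ s x t, HasDerivAt (fun u => θ u s x) (F t (θ t s x)) t) :
    ∃ C : ℝ, 1 ≤ C ∧ ∀ (s t σ : ℝ), s ∈ Set.Icc (-T) T → t ∈ Set.Icc (-T) T →
      σ ∈ Set.Icc (-T) T →
      ∀ x y ξ : EuclideanSpace ℝ (Fin n × Fin d),
      rho n d (σ - s) (θ σ s x - ξ) ≤ 1 →
      rho n d (t - σ) (θ t σ ξ - y) ≤ 1 →
      rho n d (t - s) (θ t s x - y)
        ≤ C * (rho n d (σ - s) (θ σ s x - ξ) + rho n d (t - σ) (θ t σ ξ - y)) := by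
  have hθ : IsFlow F θ := ⟨hflow0, hflow⟩
  set K := cascadeConst κ n
  have hK := one_le_cascadeConst κ n
  refine ⟨1 + n ^ 2 * K, le_add_of_nonneg_right (by positivity), ?_⟩
  intro s t σ _ _ _ x y ξ h₁ h₂
  set P₁ := rho n d (σ - s) (θ σ s x - ξ)
  set P₂ := rho n d (t - σ) (θ t σ ξ - y)
  have hsplit : θ t s x - y = (θ t σ (θ σ s x) - θ t σ ξ) + (θ t σ ξ - y) := by
    rw [hθ.apply_apply hLip]
    abel
  have hΔ := hθ.rpow_blockNorm_sub_le hcasc hLip (abs_le_one_of_rho_le_one h₂)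
    (blockNorm_le_one_of_rho_le_one h₁) (σ - s)
  calc rho n d (t - s) (θ t s x - y)
      ≤ rho n d (σ - s) (θ t σ (θ σ s x) - θ t σ ξ) + P₂ := by
        rw [hsplit, show t - s = (σ - s) + (t - σ) by ring]
        exact rho_add_le _ _ _ _
    _ ≤ |σ - s| ^ ((1 : ℝ) / 2) + n * (K * (n * (|t - σ| ^ ((1 : ℝ) / 2) + P₁))) + P₂ := by
        gcongr
        exact rho_le_of_rpow_blockNorm_le _ hΔ
    _ ≤ (1 + n ^ 2 * K) * (P₁ + P₂) := by
        have h₁' : |σ - s| ^ ((1 : ℝ) / 2) ≤ P₁ := sqrt_abs_le_rho _ _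
        have h₂' : |t - σ| ^ ((1 : ℝ) / 2) ≤ P₂ := sqrt_abs_le_rho _ _
        have : n ^ 2 * K * (|t - σ| ^ ((1 : ℝ) / 2) + P₁) ≤ n ^ 2 * K * (P₁ + P₂) :=
          mul_le_mul_of_nonneg_left (by linarith) (by positivity)
        linarith

/-- Local quasi-triangle inequality for d((s,x),(t,y)) = ρ(t−s, θ_{t,s}(x) − y), where θ
is the flow of a Lipschitz cascade vector field F (block k of F depends only on the
blocks of index ≥ k−1, and block 0 on all blocks). -/
theorem stmt_11 (n d : ℕ) (hn : 1 ≤ n) (T : ℝ) (hT : 0 < T) (κ : NNReal)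
    (F : ℝ → EuclideanSpace ℝ (Fin n × Fin d) → EuclideanSpace ℝ (Fin n × Fin d))
    (hLip : ∀ t, LipschitzWith κ (F t))
    (hcasc : ∀ (t : ℝ) (a b : EuclideanSpace ℝ (Fin n × Fin d)) (k : Fin n),
      (∀ p : Fin n × Fin d, (k:ℕ) ≤ (p.1:ℕ) + 1 → a p = b p) →
      ∀ q : Fin d, F t a (k, q) = F t b (k, q))
    (θ : ℝ → ℝ → EuclideanSpace ℝ (Fin n × Fin d) → EuclideanSpace ℝ (Fin n × Fin d))
    (hflow0 : ∀ s x, θ s s x = x)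
    (hflow : ∀ s x t, HasDerivAt (fun u => θ u s x) (F t (θ t s x)) t) :
    ∃ C : ℝ, 1 ≤ C ∧ ∀ (s t σ : ℝ), s ∈ Set.Icc (-T) T → t ∈ Set.Icc (-T) T →
      σ ∈ Set.Icc (-T) T →
      ∀ x y ξ : EuclideanSpace ℝ (Fin n × Fin d),
      rho n d (σ - s) (θ σ s x - ξ) ≤ 1 →
      rho n d (t - σ) (θ t σ ξ - y) ≤ 1 →
      rho n d (t - s) (θ t s x - y)
        ≤ C * (rho n d (σ - s) (θ σ s x - ξ) + rho n d (t - σ) (θ t σ ξ - y)) :=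
  stmt_11_general n d T κ F hLip hcasc θ hflow0 hflow
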